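/- Let f(t) be a generalized polynomial with nonnegative real coefficients and nonnegative rational exponents having common denominator r. For n ∈ ℤ>0 set f*_n(t) := Ψ(f(t)^n), where Ψ is the linear map rounding each exponent up to the nearest integer. Then for every real x > 0, the limit of f*_n(x)^(1/n) as n → ∞ exists and equals f(x). -/

import Mathlib

/-! Since `0 ≤ ⌈j⌉ - j ≤ 1`, rounding the exponent of `x ^ j` up multiplies it by a factor in
`[min 1 x, max 1 x]`. As `f ^ n` has nonnegative coefficients and evaluation at `x > 0` is
multiplicative, `f*_n(x)` lies between `min 1 x * f(x) ^ n` and `max 1 x * f(x) ^ n`, and the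
`n`-th root of a fixed positive constant tends to `1`. -/

open Finsupp

/-- Evaluation of a generalized polynomial `∑ c_j t^j` (a finitely supported
function `ℚ →₀ ℝ`, with convolution product) at a positive real `x`, using
real exponentiation. -/
noncomputable def gpEval (f : AddMonoidAlgebra ℝ ℚ) (x : ℝ) : ℝ :=
  f.coeff.sum fun j c => c * x ^ (j : ℝ)

/-- The linear rounding operator `Ψ` with `Ψ(t^j) = t^⌈j⌉`. -/
noncomputable def gpPsi (f : AddMonoidAlgebra ℝ ℚ) : AddMonoidAlgebra ℝ ℚ :=
  AddMonoidAlgebra.ofCoeff (Finsupp.mapDomain (fun j => (⌈j⌉ : ℚ)) f.coeff)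

open Filter Topology

section Nonneg

variable {k G : Type*} [Semiring k] [PartialOrder k] [IsOrderedRing k] [AddMonoid G]

theorem AddMonoidAlgebra.coeff_mul_nonneg {f g : AddMonoidAlgebra k G}
    (hf : ∀ j, 0 ≤ f.coeff j) (hg : ∀ j, 0 ≤ g.coeff j) (j : G) : 0 ≤ (f * g).coeff j := by
  classical
  rw [AddMonoidAlgebra.coeff_mul]
  refine Finset.sum_nonneg fun a _ => Finset.sum_nonneg fun b _ => ?_
  dsimp only
  split_ifs
  exacts [mul_nonneg (hf a) (hg b), le_rfl]

theorem AddMonoidAlgebra.coeff_pow_nonneg {f : AddMonoidAlgebra k G}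
    (hf : ∀ j, 0 ≤ f.coeff j) (n : ℕ) (j : G) : 0 ≤ (f ^ n).coeff j := by
  induction n generalizing j with
  | zero =>
    classical
    rw [pow_zero, AddMonoidAlgebra.one_def, AddMonoidAlgebra.coeff_single, Finsupp.single_apply]
    split_ifs
    exacts [zero_le_one, le_rfl]
  | succ n ih => exact AddMonoidAlgebra.coeff_mul_nonneg ih hf j

end Nonneg

noncomputable def gpEvalAlgHom {x : ℝ} (hx : 0 < x) : AddMonoidAlgebra ℝ ℚ →ₐ[ℝ] ℝ :=
  AddMonoidAlgebra.lift ℝ ℝ ℚ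
    { toFun := fun j => x ^ ((Multiplicative.toAdd j : ℚ) : ℝ)
      map_one' := by simp
      map_mul' := fun a b => by simp [Real.rpow_add hx] }

theorem gpEvalAlgHom_apply {x : ℝ} (hx : 0 < x) (f : AddMonoidAlgebra ℝ ℚ) :
    gpEvalAlgHom hx f = gpEval f x := by
  simp [gpEvalAlgHom, AddMonoidAlgebra.lift_apply, gpEval, smul_eq_mul]

theorem gpEval_pow (f : AddMonoidAlgebra ℝ ℚ) (n : ℕ) {x : ℝ} (hx : 0 < x) :
    gpEval (f ^ n) x = gpEval f x ^ n := by
  simp only [← gpEvalAlgHom_apply hx, map_pow]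

theorem gpEval_nonneg {f : AddMonoidAlgebra ℝ ℚ} (hf : ∀ j, 0 ≤ f.coeff j) {x : ℝ}
    (hx : 0 < x) : 0 ≤ gpEval f x :=
  Finset.sum_nonneg fun j _ => mul_nonneg (hf j) (Real.rpow_nonneg hx.le _)

theorem gpEval_gpPsi (f : AddMonoidAlgebra ℝ ℚ) (x : ℝ) :
    gpEval (gpPsi f) x = f.coeff.sum fun j c => c * x ^ ((⌈j⌉ : ℚ) : ℝ) :=
  Finsupp.sum_mapDomain_index (by simp) (by intros; ring)

theorem Real.rpow_mem_Icc_min_max {x d : ℝ} (hx : 0 < x) (hd₀ : 0 ≤ d) (hd₁ : d ≤ 1) :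
    x ^ d ∈ Set.Icc (min 1 x) (max 1 x) := by
  constructor
  · calc min 1 x = min 1 x ^ (1 : ℝ) := (Real.rpow_one _).symm
      _ ≤ min 1 x ^ d := Real.rpow_le_rpow_of_exponent_ge (lt_min one_pos hx) (min_le_left _ _) hd₁
      _ ≤ x ^ d := Real.rpow_le_rpow (lt_min one_pos hx).le (min_le_right _ _) hd₀
  · calc x ^ d ≤ max 1 x ^ d := Real.rpow_le_rpow hx.le (le_max_right _ _) hd₀
      _ ≤ max 1 x ^ (1 : ℝ) := Real.rpow_le_rpow_of_exponent_le (le_max_left _ _) hd₁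
      _ = max 1 x := Real.rpow_one _

theorem rpow_ceil_mem_Icc {x : ℝ} (hx : 0 < x) (j : ℚ) :
    x ^ ((⌈j⌉ : ℚ) : ℝ) ∈ Set.Icc (min 1 x * x ^ (j : ℝ)) (max 1 x * x ^ (j : ℝ)) := by
  have hceil : x ^ ((⌈j⌉ : ℚ) : ℝ) = x ^ ((⌈j⌉ - j : ℚ) : ℝ) * x ^ (j : ℝ) := by
    rw [← Real.rpow_add hx]; push_cast; ring_nf
  have hfrac := Real.rpow_mem_Icc_min_max hx (d := ((⌈j⌉ - j : ℚ) : ℝ))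
    (by exact_mod_cast sub_nonneg.2 (Int.le_ceil j))
    (by exact_mod_cast sub_le_iff_le_add'.2 (Int.ceil_lt_add_one j).le)
  rw [hceil]
  exact ⟨mul_le_mul_of_nonneg_right hfrac.1 (Real.rpow_nonneg hx.le _),
    mul_le_mul_of_nonneg_right hfrac.2 (Real.rpow_nonneg hx.le _)⟩

theorem gpEval_gpPsi_mem_Icc {f : AddMonoidAlgebra ℝ ℚ} (hf : ∀ j, 0 ≤ f.coeff j) {x : ℝ}
    (hx : 0 < x) :
    gpEval (gpPsi f) x ∈ Set.Icc (min 1 x * gpEval f x) (max 1 x * gpEval f x) := by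
  rw [gpEval_gpPsi, gpEval, Finsupp.sum, Finsupp.sum, Finset.mul_sum, Finset.mul_sum]
  constructor <;> refine Finset.sum_le_sum fun j _ => ?_ <;> rw [mul_left_comm]
  · exact mul_le_mul_of_nonneg_left (rpow_ceil_mem_Icc hx j).1 (hf j)
  · exact mul_le_mul_of_nonneg_left (rpow_ceil_mem_Icc hx j).2 (hf j)

theorem tendsto_mul_pow_rpow_one_div {c m : ℝ} (hc : 0 < c) (hm : 0 ≤ m) :
    Tendsto (fun n : ℕ => (c * m ^ n) ^ ((1 : ℝ) / n)) atTop (𝓝 m) := by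
  have hroot : Tendsto (fun n : ℕ => c ^ ((1 : ℝ) / n)) atTop (𝓝 1) := by
    simpa [Function.comp_def] using ((Real.continuousAt_const_rpow hc.ne').tendsto.comp
      tendsto_one_div_atTop_nhds_zero_nat)
  refine (by simpa using hroot.mul_const m : Tendsto _ atTop (𝓝 m)).congr' ?_
  filter_upwards [eventually_ne_atTop 0] with n hn
  rw [Real.mul_rpow hc.le (pow_nonneg hm n), one_div, Real.pow_rpow_inv_natCast hm hn]

theorem stmt_4_general (f : AddMonoidAlgebra ℝ ℚ)
    (hpos : ∀ j, 0 ≤ f.coeff j)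
    (x : ℝ) (hx : 0 < x) :
    Filter.Tendsto (fun n : ℕ => gpEval (gpPsi (f ^ n)) x ^ ((1 : ℝ) / n))
      Filter.atTop (nhds (gpEval f x)) := by
  have hf₀ := gpEval_nonneg hpos hx
  have hbounds (n : ℕ) := gpEval_pow f n hx ▸
    gpEval_gpPsi_mem_Icc (AddMonoidAlgebra.coeff_pow_nonneg hpos n) hx
  have hmin : 0 < min 1 x := lt_min one_pos hx
  refine tendsto_of_tendsto_of_tendsto_of_le_of_le
    (tendsto_mul_pow_rpow_one_div hmin hf₀)
    (tendsto_mul_pow_rpow_one_div (hmin.trans_le min_le_max) hf₀)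
    (fun n => ?_) (fun n => ?_)
  · exact Real.rpow_le_rpow (by positivity) (hbounds n).1 (by positivity)
  · exact Real.rpow_le_rpow ((by positivity : (0 : ℝ) ≤ _).trans (hbounds n).1) (hbounds n).2
      (by positivity)

theorem stmt_4 (r : ℕ) (hr : 0 < r) (f : AddMonoidAlgebra ℝ ℚ)
    (hexp : ∀ j ∈ f.coeff.support, ∃ i : ℕ, j = (i : ℚ) / r)
    (hpos : ∀ j, 0 ≤ f.coeff j)
    (x : ℝ) (hx : 0 < x) :
    Filter.Tendsto (fun n : ℕ => gpEval (gpPsi (f ^ n)) x ^ ((1 : ℝ) / n))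
      Filter.atTop (nhds (gpEval f x)) :=
  stmt_4_general f hpos x hx
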